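/- Let z₁, z₂, z₃ be pairwise distinct complex numbers with j(z₁, z₂, z₃) ∉ ℝ, and let (z_a, z_b, z_c) be the ordering of the three points by increasing length of the opposite side, i.e., |z_b − z_c| < |z_a − z_c| < |z_a − z_b| (this ordering exists and is unique since the side lengths are pairwise distinct). Then Im(j(z₁, z₂, z₃)) > 0 if and only if the ordered triple (z_a, z_b, z_c) is positively oriented, i.e., Im((z_c − z_a)/(z_b − z_a)) > 0. -/

import Mathlib

/-!
`jInv3` is a symmetric function of the three points, so we may take `(z₁, z₂, z₃) = (a, b, c)`.
Then `λ = (a - c) / (b - c)` satisfies `1 < |λ| < |λ - 1|`, and the imaginary part of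
`j(λ) = 4 (λ² - λ + 1)³ / (27 λ² (λ - 1)²)` factors as
`108 Im λ · (|λ|² - |λ - 1|²)(|λ|² - 1)(|λ - 1|² - 1) · (positive) / |27 λ² (λ - 1)²|²`,
whose middle three factors have signs `-, +, +` in that region. Hence `Im j > 0 ↔ Im λ < 0`,
and `(c - a) / (b - a) = λ / (λ - 1)` has imaginary part `-Im λ / |λ - 1|²`.
-/

/-- The j-invariant of a triple of complex numbers (the j-invariant of the
quadruple `(z₁, z₂, z₃, ∞)`). -/
noncomputable def jInv3 (z₁ z₂ z₃ : ℂ) : ℂ :=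
  let l := (z₁ - z₃) / (z₂ - z₃)
  4 * (l ^ 2 - l + 1) ^ 3 / (27 * l ^ 2 * (l - 1) ^ 2)

open Complex

theorem jInv3_eq_symmetric (u v w : ℂ) :
    jInv3 u v w = 4 * (u ^ 2 + v ^ 2 + w ^ 2 - u * v - v * w - w * u) ^ 3 /
      (27 * ((u - v) * (v - w) * (w - u)) ^ 2) := by
  -- no distinctness needed: when two points coincide both sides are `0` (via `x / 0 = 0`)
  by_cases hvw : v - w = 0
  · simp [jInv3, hvw]
  · simp only [jInv3]
    rw [div_sub_one hvw]
    field_simp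
    ring

theorem jInv3_eq_of_set_eq {a b c z₁ z₂ z₃ : ℂ} (hab : a ≠ b) (hac : a ≠ c) (hbc : b ≠ c)
    (h : ({a, b, c} : Set ℂ) = {z₁, z₂, z₃}) : jInv3 z₁ z₂ z₃ = jInv3 a b c := by
  have mem : ∀ x, x = a ∨ x = b ∨ x = c ↔ x = z₁ ∨ x = z₂ ∨ x = z₃ := by
    simpa [Set.ext_iff] using h
  obtain ⟨ha, hb, hc⟩ : (a = z₁ ∨ a = z₂ ∨ a = z₃) ∧ (b = z₁ ∨ b = z₂ ∨ b = z₃) ∧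
      (c = z₁ ∨ c = z₂ ∨ c = z₃) := by
    simp [← mem]
  rcases ha with rfl | rfl | rfl <;> rcases hb with rfl | rfl | rfl <;>
    rcases hc with rfl | rfl | rfl <;> first
      | rfl
      | exact absurd rfl ‹_›
      | simp only [jInv3_eq_symmetric]; ring

noncomputable def jOfLambda (l : ℂ) : ℂ :=
  4 * (l ^ 2 - l + 1) ^ 3 / (27 * l ^ 2 * (l - 1) ^ 2)

theorem jInv3_eq_jOfLambda (z₁ z₂ z₃ : ℂ) :
    jInv3 z₁ z₂ z₃ = jOfLambda ((z₁ - z₃) / (z₂ - z₃)) :=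
  rfl

theorem im_jOfLambda (l : ℂ) :
    (jOfLambda l).im = 108 * l.im * ((normSq l - normSq (l - 1)) * (normSq l - 1) *
      (normSq (l - 1) - 1) * ((normSq l - l.re + 1) ^ 2 + l.im ^ 2)) /
        normSq (27 * l ^ 2 * (l - 1) ^ 2) := by
  rw [jOfLambda, div_im, ← sub_div]
  congr 1
  simp only [pow_succ, pow_zero, one_mul, mul_im, re_ofNat, mul_re, add_re, sub_re, one_re, add_im,
    sub_im, one_im, add_zero, im_ofNat, zero_mul, sub_zero, normSq_apply]
  ring

theorem jOfLambda_im_pos_iff {l : ℂ} (h1 : 1 < ‖l‖) (h2 : ‖l‖ < ‖l - 1‖) :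
    0 < (jOfLambda l).im ↔ l.im < 0 := by
  have hl : 1 < normSq l := by rw [normSq_eq_norm_sq]; nlinarith
  have hl1 : normSq l < normSq (l - 1) := by
    rw [normSq_eq_norm_sq, normSq_eq_norm_sq]; gcongr
  have hD : 0 < normSq (27 * l ^ 2 * (l - 1) ^ 2) := by
    have : l ≠ 0 := by rintro rfl; norm_num at h1
    have : l - 1 ≠ 0 := by rw [sub_ne_zero]; rintro rfl; norm_num at h2
    exact normSq_pos.2 (by simp [*])
  have hP : 0 < (normSq l - l.re + 1) ^ 2 + l.im ^ 2 := by
    have : l.re ^ 2 ≤ normSq l := by rw [normSq_apply]; nlinarith [sq_nonneg l.im]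
    nlinarith [sq_nonneg (l.re - 1)]
  have hK : (normSq l - normSq (l - 1)) * (normSq l - 1) * (normSq (l - 1) - 1) *
      ((normSq l - l.re + 1) ^ 2 + l.im ^ 2) < 0 := by
    refine mul_neg_of_neg_of_pos (mul_neg_of_neg_of_pos (mul_neg_of_neg_of_pos ?_ ?_) ?_) hP
    all_goals linarith
  rw [im_jOfLambda, div_pos_iff_of_pos_right hD]
  generalize (normSq l - normSq (l - 1)) * _ * _ * _ = K at hK ⊢
  constructor <;> intro h <;> nlinarith

theorem im_div_sub_one_pos_iff {l : ℂ} (hl : l ≠ 1) : 0 < (l / (l - 1)).im ↔ l.im < 0 := by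
  have him : (l / (l - 1)).im = -l.im / normSq (l - 1) := by
    rw [div_im]
    simp only [sub_re, one_re, normSq_apply, sub_im, one_im, sub_zero]
    ring
  rw [him, div_pos_iff_of_pos_right (normSq_pos.2 (sub_ne_zero.2 hl)), neg_pos]

theorem jInv3_im_pos_iff_orientation_general (z₁ z₂ z₃ a b c : ℂ)
    (hset : ({a, b, c} : Set ℂ) = {z₁, z₂, z₃})
    (hbc : ‖b - c‖ < ‖a - c‖)
    (hac : ‖a - c‖ < ‖a - b‖) :
    0 < (jInv3 z₁ z₂ z₃).im ↔ 0 < ((c - a) / (b - a)).im := by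
  have hb_ne_c : b ≠ c := by rintro rfl; exact hac.false
  have ha_ne_c : a ≠ c := sub_ne_zero.1 (norm_pos_iff.1 ((norm_nonneg _).trans_lt hbc))
  have ha_ne_b : a ≠ b :=
    sub_ne_zero.1 (norm_pos_iff.1 ((norm_nonneg _).trans_lt (hbc.trans hac)))
  have hbc0 : b - c ≠ 0 := sub_ne_zero.2 hb_ne_c
  set l := (a - c) / (b - c)
  have hl_sub_one : l - 1 = (a - b) / (b - c) := by rw [div_sub_one hbc0]; ring
  have hl : 1 < ‖l‖ := by rwa [norm_div, one_lt_div (norm_pos_iff.2 hbc0)]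
  have hl' : ‖l‖ < ‖l - 1‖ := by rw [hl_sub_one, norm_div, norm_div]; gcongr
  have horient : (c - a) / (b - a) = l / (l - 1) := by
    rw [hl_sub_one, div_div_div_cancel_right₀ hbc0, ← neg_sub a c, ← neg_sub a b, neg_div_neg_eq]
  rw [jInv3_eq_of_set_eq ha_ne_b ha_ne_c hb_ne_c hset, jInv3_eq_jOfLambda,
    jOfLambda_im_pos_iff hl hl', horient, im_div_sub_one_pos_iff fun h ↦ by simp [h] at hl]

/-- Let `z₁, z₂, z₃` be pairwise distinct points whose j-invariant is not real,
and let `(a, b, c)` be their ordering by increasing length of the opposite side,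
i.e. `|b − c| < |a − c| < |a − b|`. Then `Im j > 0` if and only if the ordered
triple `(a, b, c)` is positively oriented, i.e. `Im ((c − a)/(b − a)) > 0`. -/
theorem jInv3_im_pos_iff_orientation (z₁ z₂ z₃ a b c : ℂ)
    (h12 : z₁ ≠ z₂) (h13 : z₁ ≠ z₃) (h23 : z₂ ≠ z₃)
    (hj : (jInv3 z₁ z₂ z₃).im ≠ 0)
    (hset : ({a, b, c} : Set ℂ) = {z₁, z₂, z₃})
    (hbc : ‖b - c‖ < ‖a - c‖)
    (hac : ‖a - c‖ < ‖a - b‖) :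
    0 < (jInv3 z₁ z₂ z₃).im ↔ 0 < ((c - a) / (b - a)).im :=
  jInv3_im_pos_iff_orientation_general z₁ z₂ z₃ a b c hset hbc hac
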